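/- Let A and B be finite sets, E a set of edges of the complete bipartite graph on A ⊔ B, and Q ⊆ E. Suppose P is a set of edges of the complete bipartite graph on A ⊔ B disjoint from E, of minimum cardinality among all such sets with the property that for every connected component D of (A, B, Q), all vertices of D lie in a single connected component of (A, B, (E − Q) ∪ P). Then the graph (A, B, P) is a forest (contains no cycle); consequently |P| ≤ |A| + |B| − 1. -/

import Mathlib

variable {R C : Type*}

/-- Direction-blind adjacency in the bipartite graph on `R ⊕ C` via an edge in `S`. -/
def Adj (S : Set (R × C)) (v w : R ⊕ C) : Prop :=
  ∃ e ∈ S, (v = Sum.inl e.1 ∧ w = Sum.inr e.2) ∨ (v = Sum.inr e.2 ∧ w = Sum.inl e.1)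

/-- Connectivity in the bipartite graph on `R ⊕ C` via edges in `S`. -/
def Conn (S : Set (R × C)) : (R ⊕ C) → (R ⊕ C) → Prop :=
  Relation.ReflTransGen (Adj S)

/-- `D` is a connected component of the bipartite graph with edge set `S`. -/
def IsCC (S : Set (R × C)) (D : Set (R ⊕ C)) : Prop :=
  ∃ v, D = {w | Conn S v w}

/-- All vertices of `D` are joined by paths using edges in `S`. -/
def ConnectedOn (S : Set (R × C)) (D : Set (R ⊕ C)) : Prop :=
  ∀ v ∈ D, ∀ w ∈ D, Conn S v w

/-- The bipartite graph with edge set `P` contains an edge-simple cycle. -/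
def HasCycle {A B : Type*} (P : Set (A × B)) : Prop :=
  ∃ (k : ℕ) (r : ℕ → A) (c : ℕ → B),
    0 < k ∧ r k = r 0 ∧
    (∀ t < k, (r t, c t) ∈ P ∧ (r (t + 1), c t) ∈ P) ∧
    (∀ s < k, ∀ t < k, s ≠ t → (r s, c s) ≠ (r t, c t)) ∧
    (∀ s < k, ∀ t < k, s ≠ t → (r (s + 1), c s) ≠ (r (t + 1), c t)) ∧
    (∀ s < k, ∀ t < k, (r s, c s) ≠ (r (t + 1), c t))

/-! If an edge `e` of `P` were not a bridge of `(A, B, P)`, its endpoints would stay connected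
in `P - e`, so every component of `Q` would remain connected in `(E - Q) ∪ (P - e)`, contradicting
minimality. So every edge of `P` is a bridge. Then `P` has no cycle, since going round a cycle
joins the endpoints of its first edge without using it; and a graph all of whose edges are bridges
is acyclic, hence extends to a spanning tree of the complete graph on `A ⊔ B`, which has
`|A| + |B| - 1` edges. -/

theorem SimpleGraph.IsAcyclic.ncard_edgeSet_le {V : Type*} [Fintype V] {G : SimpleGraph V}
    (hG : G.IsAcyclic) : G.edgeSet.ncard ≤ Fintype.card V - 1 := by
  cases isEmpty_or_nonempty V
  · simp [Set.eq_empty_of_isEmpty G.edgeSet]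
  obtain ⟨T, hGT, -, hT⟩ :=
    SimpleGraph.connected_top.exists_isTree_le_of_le_of_isAcyclic le_top hG
  classical
  have hcard := hT.card_edgeFinset
  calc G.edgeSet.ncard ≤ T.edgeSet.ncard := Set.ncard_le_ncard (SimpleGraph.edgeSet_mono hGT)
    _ = Fintype.card V - 1 := by rw [← SimpleGraph.coe_edgeFinset, Set.ncard_coe_finset]; omega

def bipartiteEdge (e : R × C) : Sym2 (R ⊕ C) := s(Sum.inl e.1, Sum.inr e.2)

lemma bipartiteEdge_injective : Function.Injective (bipartiteEdge : R × C → Sym2 (R ⊕ C)) := by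
  rintro ⟨a, b⟩ ⟨a', b'⟩ h
  simpa [bipartiteEdge] using h

def bipartiteGraph (S : Set (R × C)) : SimpleGraph (R ⊕ C) :=
  SimpleGraph.fromEdgeSet (bipartiteEdge '' S)

lemma adj_iff_bipartiteGraph_adj {S : Set (R × C)} {v w : R ⊕ C} :
    Adj S v w ↔ (bipartiteGraph S).Adj v w := by
  simp only [Adj, bipartiteGraph, SimpleGraph.fromEdgeSet_adj, Set.mem_image, bipartiteEdge,
    Sym2.eq_iff]
  constructor
  · rintro ⟨e, he, h | h⟩ <;> obtain ⟨rfl, rfl⟩ := h <;> exact ⟨⟨e, he, by tauto⟩, by simp⟩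
  · rintro ⟨⟨e, he, h⟩, -⟩
    exact ⟨e, he, by tauto⟩

lemma conn_iff_reachable {S : Set (R × C)} {v w : R ⊕ C} :
    Conn S v w ↔ (bipartiteGraph S).Reachable v w := by
  rw [SimpleGraph.reachable_iff_reflTransGen, Conn]
  congr!
  ext
  exact adj_iff_bipartiteGraph_adj

lemma bipartiteGraph_sdiff_singleton (S : Set (R × C)) (e : R × C) :
    bipartiteGraph (S \ {e}) = (bipartiteGraph S).deleteEdges {bipartiteEdge e} := by
  rw [bipartiteGraph, SimpleGraph.deleteEdges, bipartiteGraph, ← SimpleGraph.fromEdgeSet_sdiff,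
    Set.image_sdiff bipartiteEdge_injective, Set.image_singleton]

lemma ncard_edgeSet_bipartiteGraph (S : Set (R × C)) :
    (bipartiteGraph S).edgeSet.ncard = S.ncard := by
  rw [bipartiteGraph, SimpleGraph.edgeSet_fromEdgeSet, sdiff_eq_left.2,
    Set.ncard_image_of_injective _ bipartiteEdge_injective]
  rw [Set.disjoint_left]
  rintro _ ⟨e, -, rfl⟩
  simp [bipartiteEdge]

lemma Conn.symm {S : Set (R × C)} {v w : R ⊕ C} (h : Conn S v w) : Conn S w v :=
  conn_iff_reachable.2 (conn_iff_reachable.1 h).symm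

lemma Conn.mono {S T : Set (R × C)} (hST : S ⊆ T) {v w : R ⊕ C} (h : Conn S v w) : Conn T v w :=
  Relation.ReflTransGen.mono (r := Adj S) (fun _ _ ⟨e, he, hvw⟩ => ⟨e, hST he, hvw⟩) v w h

lemma Conn.sdiff_singleton {S : Set (R × C)} {v w : R ⊕ C} (h : Conn S v w) {e : R × C}
    (he : Conn (S \ {e}) (Sum.inl e.1) (Sum.inr e.2)) : Conn (S \ {e}) v w := by
  refine Relation.reflTransGen_closed (r := Adj S) (fun _ _ ⟨f, hf, hvw⟩ => ?_) v w h
  by_cases hfe : f = e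
  · subst hfe
    rcases hvw with ⟨rfl, rfl⟩ | ⟨rfl, rfl⟩
    exacts [he, he.symm]
  · exact .single ⟨f, ⟨hf, hfe⟩, hvw⟩

def EdgesAreBridges (S : Set (R × C)) : Prop :=
  ∀ e ∈ S, ¬ Conn (S \ {e}) (Sum.inl e.1) (Sum.inr e.2)

lemma EdgesAreBridges.isAcyclic_bipartiteGraph {S : Set (R × C)} (hS : EdgesAreBridges S) :
    (bipartiteGraph S).IsAcyclic := by
  rw [SimpleGraph.isAcyclic_iff_forall_isBridge]
  intro _ h
  rw [bipartiteGraph, SimpleGraph.edgeSet_fromEdgeSet] at h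
  obtain ⟨⟨e, he, rfl⟩, -⟩ := h
  rw [bipartiteEdge, SimpleGraph.isBridge_iff, ← bipartiteEdge, ← bipartiteGraph_sdiff_singleton,
    ← conn_iff_reachable]
  exact hS e he

lemma EdgesAreBridges.ncard_le [Fintype R] [Fintype C] {S : Set (R × C)}
    (hS : EdgesAreBridges S) : S.ncard ≤ Fintype.card R + Fintype.card C - 1 := by
  rw [← ncard_edgeSet_bipartiteGraph, ← Fintype.card_sum]
  exact hS.isAcyclic_bipartiteGraph.ncard_edgeSet_le

lemma HasCycle.not_edgesAreBridges {P : Set (R × C)} (hP : HasCycle P) :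
    ¬ EdgesAreBridges P := by
  obtain ⟨k, r, c, hk, hrk, hedges, hfwd, -, hfb⟩ := hP
  set P' := P \ {(r 0, c 0)}
  have detour : ∀ t < k, Conn P' (Sum.inr (c 0)) (Sum.inl (r (t + 1))) := by
    intro t
    induction t with
    | zero =>
      intro h0
      exact .single ⟨(r 1, c 0), ⟨(hedges 0 h0).2, fun h => hfb 0 h0 0 h0 h.symm⟩, .inr ⟨rfl, rfl⟩⟩
    | succ t ih =>
      intro ht
      have hfwd' : Adj P' (Sum.inl (r (t + 1))) (Sum.inr (c (t + 1))) :=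
        ⟨_, ⟨(hedges (t + 1) ht).1, hfwd (t + 1) ht 0 hk (by omega)⟩, .inl ⟨rfl, rfl⟩⟩
      have hbwd' : Adj P' (Sum.inr (c (t + 1))) (Sum.inl (r (t + 2))) :=
        ⟨_, ⟨(hedges (t + 1) ht).2, fun h => hfb 0 hk (t + 1) ht h.symm⟩, .inr ⟨rfl, rfl⟩⟩
      exact ((ih (by omega)).tail hfwd').tail hbwd'
  have hround := detour (k - 1) (by omega)
  rw [Nat.sub_add_cancel hk, hrk] at hround
  exact fun hbridges => hbridges _ (hedges 0 hk).1 hround.symm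

theorem stmt14_general {A B : Type*} [Fintype A] [Fintype B]
    (E Q : Set (A × B))
    (P : Set (A × B)) (hPE : ∀ e ∈ P, e ∉ E)
    (hPconn : ∀ D : Set (A ⊕ B), IsCC Q D → ConnectedOn ((E \ Q) ∪ P) D)
    (hmin : ∀ P' : Set (A × B), (∀ e ∈ P', e ∉ E) →
      (∀ D : Set (A ⊕ B), IsCC Q D → ConnectedOn ((E \ Q) ∪ P') D) →
      P.ncard ≤ P'.ncard) :
    ¬ HasCycle P ∧ P.ncard ≤ Fintype.card A + Fintype.card B - 1 := by
  have hbridges : EdgesAreBridges P := by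
    intro e he hconn
    have hconn' : Conn (((E \ Q) ∪ P) \ {e}) (Sum.inl e.1) (Sum.inr e.2) :=
      hconn.mono (Set.sdiff_subset_sdiff_left Set.subset_union_right)
    have hsub : ((E \ Q) ∪ P) \ {e} ⊆ (E \ Q) ∪ (P \ {e}) := by
      rw [Set.union_sdiff_distrib]
      exact Set.union_subset_union_left _ Set.sdiff_subset
    have hle := hmin (P \ {e}) (fun f hf => hPE f hf.1) fun D hD v hv w hw =>
      ((hPconn D hD v hv w hw).sdiff_singleton hconn').mono hsub
    exact (Set.ncard_sdiff_singleton_lt_of_mem he).not_ge hle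
  exact ⟨fun hcyc => hcyc.not_edgesAreBridges hbridges, hbridges.ncard_le⟩

/-- A minimum-cardinality set `P` of new edges connecting the vertices of every
connected component of `(A, B, Q)` in `(A, B, (E - Q) ∪ P)` is a forest, so
`|P| ≤ |A| + |B| - 1`. -/
theorem stmt14 {A B : Type*} [Fintype A] [Fintype B]
    (E Q : Set (A × B)) (hQE : Q ⊆ E)
    (P : Set (A × B)) (hPE : ∀ e ∈ P, e ∉ E)
    (hPconn : ∀ D : Set (A ⊕ B), IsCC Q D → ConnectedOn ((E \ Q) ∪ P) D)
    (hmin : ∀ P' : Set (A × B), (∀ e ∈ P', e ∉ E) →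
      (∀ D : Set (A ⊕ B), IsCC Q D → ConnectedOn ((E \ Q) ∪ P') D) →
      P.ncard ≤ P'.ncard) :
    ¬ HasCycle P ∧ P.ncard ≤ Fintype.card A + Fintype.card B - 1 :=
  stmt14_general E Q P hPE hPconn hmin
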